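/- For an orthogonal $\g$-module $V$ with zero-weight multiplicity $m(0)$: (i) $\dim Spin_0(V) = 2^{(\dim V - m(0))/2}$; (ii) $\wedge^\bullet V \cong 2^{m(0)} \cdot Spin_0(V)^{\otimes 2}$; (iii) $Spin_0(V)$ is self-dual. -/

import Mathlib

open scoped Classical
noncomputable section

/-!  We work at the level of formal characters: a finite-dimensional module of a
reductive Lie algebra is determined by its weight multiplicity function
`m : Λ →₀ ℕ` on the weight lattice `Λ` (a subgroup of a `ℚ`-vector space, so that
half-weights make sense).  An orthogonal module has a self-dual character. -/

variable {Λ : Type*} [AddCommGroup Λ] [Module ℚ Λ]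

/-- The formal character `∑_μ m(μ) e^μ ∈ ℤ[Λ]` of the module with weight
multiplicities `m`. -/
def chOf (m : Λ →₀ ℕ) : AddMonoidAlgebra ℤ Λ :=
  m.sum fun μ k => (k : ℤ) • AddMonoidAlgebra.single μ 1

/-- The character `∏_μ (1+e^μ)^{m(μ)}` of the full exterior algebra `⋀^• V` of the
module with weight multiplicities `m`. -/
def extCh (m : Λ →₀ ℕ) : AddMonoidAlgebra ℤ Λ :=
  ∏ μ ∈ m.support, (1 + AddMonoidAlgebra.single μ 1) ^ (m μ)

/-- `P` is a "half" `Δ(V)⁺` of the set of nonzero weights of `m`: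
`Δ(V) = Δ(V)⁺ ⊔ (-Δ(V)⁺)`. -/
def IsHalf (m : Λ →₀ ℕ) (P : Finset Λ) : Prop :=
  (0 : Λ) ∉ P ∧ ↑P ⊆ m.support ∧
    ∀ μ ∈ m.support, μ ≠ 0 → (μ ∈ P ↔ -μ ∉ P)

/-- Self-duality of a character (in particular, the character of any orthogonal
module is self-dual). -/
def SelfDualCh (m : Λ →₀ ℕ) : Prop := ∀ μ, m (-μ) = m μ

/-- The dimension of the module with weight multiplicities `m`. -/
def dimOf (m : Λ →₀ ℕ) : ℕ := m.sum fun _ k => k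

/-- The character `∏_{μ ∈ Δ(V)⁺} (e^{μ/2}+e^{-μ/2})^{m(μ)}` of the reduced spin
module `Spin₀(V)` of the orthogonal module with weight multiplicities `m`,
relative to the half `P` of its set of nonzero weights. -/
def spinCh (m : Λ →₀ ℕ) (P : Finset Λ) : AddMonoidAlgebra ℤ Λ :=
  ∏ μ ∈ P,
    (AddMonoidAlgebra.single ((2:ℚ)⁻¹ • μ) 1
      + AddMonoidAlgebra.single (-((2:ℚ)⁻¹ • μ)) (1:ℤ)) ^ (m μ)

/-- `s` is the character of `Spin(V)` for the orthogonal module `V` with character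
`m`: the defining property is `⋀^• V ≅ Spin(V)^{⊗2}` if `dim V` is even and
`⋀^• V ≅ 2 · Spin(V)^{⊗2}` if `dim V` is odd. -/
def IsSpinCh (m s : Λ →₀ ℕ) : Prop :=
  extCh m = (if Even (dimOf m) then 1 else 2) * (chOf s) ^ 2

/-- The augmentation (sum of coefficients) ring homomorphism. -/
def augHom : AddMonoidAlgebra ℤ Λ →+* ℤ :=
  AddMonoidAlgebra.liftNCRingHom (RingHom.id ℤ) 1 (fun _ _ => Commute.all _ _)

lemma augHom_single (a : Λ) (b : ℤ) : augHom (AddMonoidAlgebra.single a b) = b := by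
  simp [augHom, AddMonoidAlgebra.liftNCRingHom, AddMonoidAlgebra.liftNC_single]

lemma augHom_eq_sum (f : AddMonoidAlgebra ℤ Λ) :
    augHom f = Finsupp.sum f.coeff (fun _ c => c) := by
  induction f using AddMonoidAlgebra.induction_linear with
  | zero => simp
  | add f g hf hg =>
      rw [map_add, hf, hg, AddMonoidAlgebra.coeff_add, ← Finsupp.sum_add_index] <;> simp
  | single a b =>
      rw [augHom_single]
      simp [AddMonoidAlgebra.coeff_single, Finsupp.sum_single_index]

lemma half_add_half (μ : Λ) : (2:ℚ)⁻¹ • μ + (2:ℚ)⁻¹ • μ = μ := by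
  rw [← add_smul]; norm_num

/-- for an orthogonal module `V` with character `m` and zero-weight
multiplicity `m(0)`:
(i) `dim Spin₀(V) = 2^{(dim V - m(0))/2}`;
(ii) `⋀^• V ≅ 2^{m(0)} · Spin₀(V)^{⊗2}`;
(iii) `Spin₀(V)` is self-dual (its character is invariant under `μ ↦ -μ`). -/
theorem spin0_properties (m : Λ →₀ ℕ) (hsd : SelfDualCh m)
    (P : Finset Λ) (hP : IsHalf m P) :
    Finsupp.sum (spinCh m P).coeff (fun _ c => c) = 2 ^ ((dimOf m - m 0) / 2) ∧
    extCh m = (2 : AddMonoidAlgebra ℤ Λ) ^ (m 0) * (spinCh m P) ^ 2 ∧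
    Finsupp.mapDomain (fun μ : Λ => -μ) (spinCh m P).coeff = (spinCh m P).coeff := by
  obtain ⟨hP0, hPsub, hPiff⟩ := hP
  set N := P.image (Neg.neg : Λ → Λ) with hN
  have hmemN : ∀ μ : Λ, μ ∈ N ↔ -μ ∈ P := by
    intro μ
    simp only [hN, Finset.mem_image]
    constructor
    · rintro ⟨ν, hν, rfl⟩; simpa using hν
    · intro h; exact ⟨-μ, h, by simp⟩
  have hdisj : Disjoint P N := by
    rw [Finset.disjoint_left]
    intro μ hμP hμN
    have hμs : μ ∈ m.support := hPsub hμP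
    have hμ0 : μ ≠ 0 := fun h => hP0 (h ▸ hμP)
    exact ((hPiff μ hμs hμ0).1 hμP) ((hmemN μ).1 hμN)
  have herase : m.support.erase 0 = P ∪ N := by
    ext μ
    simp only [Finset.mem_erase, Finset.mem_union]
    constructor
    · rintro ⟨hμ0, hμs⟩
      by_cases h : μ ∈ P
      · exact Or.inl h
      · right; rw [hmemN]
        by_contra hn
        exact h ((hPiff μ hμs hμ0).2 hn)
    · rintro (h | h)
      · exact ⟨fun hz => hP0 (hz ▸ h), hPsub h⟩
      · rw [hmemN] at h
        have hs : -μ ∈ m.support := hPsub h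
        have : m μ ≠ 0 := by
          rw [← hsd μ]; exact Finsupp.mem_support_iff.mp hs
        refine ⟨fun hz => hP0 ?_, Finsupp.mem_support_iff.mpr this⟩
        rw [← neg_zero, ← hz]; exact h
  have hsumN : ∑ μ ∈ N, m μ = ∑ μ ∈ P, m μ := by
    rw [hN, Finset.sum_image (fun a _ b _ h => neg_injective h)]
    exact Finset.sum_congr rfl fun μ _ => hsd μ
  have hsum : dimOf m = m 0 + 2 * ∑ μ ∈ P, m μ := by
    have h3 : dimOf m = m 0 + ∑ μ ∈ m.support.erase 0, m μ := by
      rw [dimOf, Finsupp.sum]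
      by_cases h0 : (0:Λ) ∈ m.support
      · rw [← Finset.add_sum_erase _ _ h0]
      · rw [Finset.erase_eq_of_notMem h0, Finsupp.notMem_support_iff.mp h0, zero_add]
    rw [h3, herase, Finset.sum_union hdisj, hsumN]
    ring
  refine ⟨?_, ?_, ?_⟩
  · -- (i)
    have haug : augHom (spinCh m P) = 2 ^ ∑ μ ∈ P, m μ := by
      rw [spinCh, map_prod, ← Finset.prod_pow_eq_pow_sum]
      refine Finset.prod_congr rfl fun μ _ => ?_
      rw [map_pow, map_add, augHom_single, augHom_single]
      norm_num
    rw [← augHom_eq_sum, haug]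
    congr 1
    omega
  · -- (ii)
    have key : ∀ μ : Λ,
        (AddMonoidAlgebra.single ((2:ℚ)⁻¹ • μ) 1
          + AddMonoidAlgebra.single (-((2:ℚ)⁻¹ • μ)) (1:ℤ)) ^ 2
        = (1 + AddMonoidAlgebra.single μ 1) * (1 + AddMonoidAlgebra.single (-μ) 1) := by
      intro μ
      have hh := half_add_half μ
      have hnn : -((2:ℚ)⁻¹ • μ) + -((2:ℚ)⁻¹ • μ) = -μ := by
        rw [← neg_add, hh]
      rw [sq, add_mul, mul_add, mul_add, AddMonoidAlgebra.single_mul_single,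
        AddMonoidAlgebra.single_mul_single, AddMonoidAlgebra.single_mul_single,
        AddMonoidAlgebra.single_mul_single, hh, hnn, add_neg_cancel, neg_add_cancel,
        mul_one, ← AddMonoidAlgebra.one_def]
      ring_nf
      rw [AddMonoidAlgebra.single_mul_single, add_neg_cancel, mul_one,
        ← AddMonoidAlgebra.one_def]
      ring
    have hspin2 : (spinCh m P) ^ 2
        = ∏ μ ∈ P, ((1 + AddMonoidAlgebra.single μ (1:ℤ)) ^ (m μ)
            * (1 + AddMonoidAlgebra.single (-μ) (1:ℤ)) ^ (m μ)) := by
      rw [spinCh, ← Finset.prod_pow]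
      refine Finset.prod_congr rfl fun μ _ => ?_
      rw [← pow_mul, mul_comm (m μ) 2, pow_mul, key, mul_pow]
    have hprodN : ∏ μ ∈ N, (1 + AddMonoidAlgebra.single μ (1:ℤ)) ^ (m μ)
        = ∏ μ ∈ P, (1 + AddMonoidAlgebra.single (-μ) (1:ℤ)) ^ (m μ) := by
      rw [hN, Finset.prod_image (fun a _ b _ h => neg_injective h)]
      exact Finset.prod_congr rfl fun μ _ => by rw [hsd]
    have hext : extCh m = 2 ^ (m 0)
        * ∏ μ ∈ m.support.erase 0, (1 + AddMonoidAlgebra.single μ (1:ℤ)) ^ (m μ) := by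
      rw [extCh]
      by_cases h0 : (0:Λ) ∈ m.support
      · rw [← Finset.mul_prod_erase _ _ h0, ← AddMonoidAlgebra.one_def,
          one_add_one_eq_two]
      · rw [Finset.erase_eq_of_notMem h0, Finsupp.notMem_support_iff.mp h0, pow_zero,
          one_mul]
    rw [hext, herase, Finset.prod_union hdisj, hprodN, hspin2, ← Finset.prod_mul_distrib]
  · -- (iii)
    have hmap : Finsupp.mapDomain (fun μ : Λ => -μ) (spinCh m P).coeff
        = (AddMonoidAlgebra.mapDomainRingHom ℤ (negAddMonoidHom (α := Λ)) (spinCh m P)).coeff := by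
      simp [AddMonoidAlgebra.mapDomainRingHom_apply, negAddMonoidHom]
    have h1 : ∀ (a : Λ), AddMonoidAlgebra.mapDomainRingHom ℤ (negAddMonoidHom (α := Λ))
        (AddMonoidAlgebra.single a (1:ℤ)) = AddMonoidAlgebra.single (-a) 1 := by
      intro a
      simp [AddMonoidAlgebra.mapDomainRingHom_apply, AddMonoidAlgebra.mapDomain_single,
        negAddMonoidHom]
    have hφ : AddMonoidAlgebra.mapDomainRingHom ℤ (negAddMonoidHom (α := Λ)) (spinCh m P)
        = spinCh m P := by
      rw [spinCh, map_prod]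
      refine Finset.prod_congr rfl fun μ _ => ?_
      rw [map_pow, map_add, h1, h1, neg_neg, add_comm]
    exact hmap.trans (congrArg AddMonoidAlgebra.coeff hφ)
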